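/- Let A be a unital complex C*-algebra and let a, r ∈ A both be selfadjoint. Let f : ℝ → ℂ be a bounded continuous integrable function such that p ↦ p·f̂(p) is integrable. Then ‖f(a + r) − f(a)‖ ≤ (2π)^{−1/2} · ‖r‖ · ∫_ℝ |p·f̂(p)| dp, where f(a) and f(a+r) denote the continuous functional calculus of the selfadjoint elements a and a + r applied to f. -/

import Mathlib

/-!
Write `f(x) = (2π)^{-1/2} ∫ f̂(p) e^{ipx} dp` by Fourier inversion; the functional calculus
commutes with the integral, so `f(c) = (2π)^{-1/2} ∫ f̂(p) e^{ipc} dp` for selfadjoint `c`.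
For skew-adjoint `x, y` the Duhamel path `s ↦ e^{sx} e^{(1-s)y}` has derivative
`e^{sx} (x - y) e^{(1-s)y}`, a product of `x - y` with unitaries, so
`‖e^{ip(a+r)} - e^{ipa}‖ ≤ |p| ‖r‖`; integrating against `|f̂(p)|` gives the estimate.
-/

open MeasureTheory

/-- The Fourier transform `f̂(p) = (2π)^{-1/2} ∫ f(x) e^{-ixp} dx` of a function `f : ℝ → ℂ`. -/
noncomputable def fourierHat (f : ℝ → ℂ) (p : ℝ) : ℂ :=
  (Real.sqrt (2 * Real.pi) : ℂ)⁻¹ * ∫ x : ℝ, f x * Complex.exp (-(Complex.I * x * p))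

open Set NormedSpace
open Complex (I)
open scoped FourierTransform

theorem Continuous.integrable_of_integrable_id_smul {E : Type*} [NormedAddCommGroup E]
    [NormedSpace ℝ E] {g : ℝ → E} (hg : Continuous g) (h : Integrable fun p : ℝ => p • g p) :
    Integrable g := by
  have hout : IntegrableOn g (Icc (-1) 1)ᶜ := by
    refine h.norm.integrableOn.mono' hg.aestronglyMeasurable.restrict
      (ae_restrict_of_forall_mem measurableSet_Icc.compl fun p hp => ?_)
    have hp1 : 1 ≤ |p| := by
      by_contra! hp'
      exact hp (abs_le.1 hp'.le)
    rw [norm_smul, Real.norm_eq_abs]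
    exact le_mul_of_one_le_left (norm_nonneg _) hp1
  simpa using (hg.integrableOn_Icc (a := -1) (b := 1)).union hout

theorem fourierHat_eq_fourier (f : ℝ → ℂ) (p : ℝ) :
    fourierHat f p = (Real.sqrt (2 * Real.pi) : ℂ)⁻¹ * 𝓕 f (p / (2 * Real.pi)) := by
  rw [fourierHat, Real.fourier_real_eq_integral_exp_smul]
  congr 2 with x
  rw [smul_eq_mul, mul_comm]
  congr 2
  push_cast
  field_simp

theorem continuous_fourierHat {f : ℝ → ℂ} (hf : Integrable f) : Continuous (fourierHat f) := by
  have : Continuous (𝓕 f) :=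
    VectorFourier.fourierIntegral_continuous Real.continuous_fourierChar continuous_inner hf
  simp only [funext (fourierHat_eq_fourier f)]
  fun_prop

theorem fourierHat_inversion {f : ℝ → ℂ} (hf_cont : Continuous f) (hf : Integrable f)
    (hf_hat : Integrable (fourierHat f)) (x : ℝ) :
    (Real.sqrt (2 * Real.pi) : ℂ)⁻¹ * ∫ p : ℝ, fourierHat f p * Complex.exp (I * p * x) = f x := by
  set c : ℂ := (Real.sqrt (2 * Real.pi) : ℂ)
  have h2π : 0 < 2 * Real.pi := by positivity
  have hc : c ≠ 0 := Complex.ofReal_ne_zero.2 (Real.sqrt_pos.2 h2π).ne'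
  have hc2 : c * c = (2 * Real.pi : ℝ) := by rw [← Complex.ofReal_mul, Real.mul_self_sqrt h2π.le]
  have hF (p : ℝ) : 𝓕 f (p / (2 * Real.pi)) = c * fourierHat f p := by
    rw [fourierHat_eq_fourier, mul_inv_cancel_left₀ hc]
  have hF_int : Integrable (𝓕 f) :=
    (integrable_comp_div_iff _ h2π.ne').1 (by simpa only [hF] using hf_hat.const_mul c)
  set K : ℝ → ℂ := fun ξ => Complex.exp (↑(2 * Real.pi * (ξ * x)) * I) • 𝓕 f ξ
  have hfK : f x = ∫ ξ, K ξ := by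
    rw [← congrFun (hf_cont.fourierInv_fourier_eq hf hF_int) x, Real.fourierInv_eq']
    simp [K, mul_comm]
  have hK (p : ℝ) : K (p / (2 * Real.pi)) = c * (fourierHat f p * Complex.exp (I * p * x)) := by
    simp only [K, hF, smul_eq_mul, ← mul_assoc, mul_div_cancel₀ _ h2π.ne']
    rw [show (p * x : ℝ) * I = I * p * x by push_cast; ring]
    ring
  have hsubst := Measure.integral_comp_div K (2 * Real.pi)
  simp only [hK, integral_const_mul, ← hfK, abs_of_pos h2π] at hsubst
  rw [Complex.real_smul, ← hc2, mul_assoc] at hsubst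
  rw [mul_left_cancel₀ hc hsubst, inv_mul_cancel_left₀ hc]

theorem hasDerivAt_exp_smul_mul_exp_one_sub_smul {𝔸 : Type*} [NormedRing 𝔸] [NormedAlgebra ℝ 𝔸]
    [CompleteSpace 𝔸] (x y : 𝔸) (s : ℝ) :
    HasDerivAt (fun t : ℝ => exp (t • x) * exp ((1 - t) • y))
      (exp (s • x) * (x - y) * exp ((1 - s) • y)) s := by
  have hy : HasDerivAt (fun t : ℝ => exp ((1 - t) • y)) (-(y * exp ((1 - s) • y))) s := by
    simpa [Function.comp_def] using
      (hasDerivAt_exp_smul_const' y (1 - s)).scomp s ((hasDerivAt_id s).const_sub 1)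
  refine ((hasDerivAt_exp_smul_const x s).mul hy).congr_deriv ?_
  noncomm_ring

section CStarAlgebra

variable {A : Type*} [CStarAlgebra A]

theorem IsSelfAdjoint.I_mul_ofReal_smul_mem_skewAdjoint {c : A} (hc : IsSelfAdjoint c) (p : ℝ) :
    (I * p) • c ∈ skewAdjoint A :=
  hc.smul_mem_skewAdjoint (by simp [skewAdjoint.mem_iff])

theorem norm_exp_le_one_of_mem_skewAdjoint {x : A} (hx : x ∈ skewAdjoint A) : ‖exp x‖ ≤ 1 := by
  let +nondep : NormedAlgebra ℚ A := .restrictScalars ℚ ℂ A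
  rcases subsingleton_or_nontrivial A with _ | _
  · simp [Subsingleton.elim (exp x) 0]
  · exact (CStarRing.norm_of_mem_unitary (exp_mem_unitary_of_mem_skewAdjoint hx)).le

theorem norm_exp_sub_exp_le_of_mem_skewAdjoint {x y : A} (hx : x ∈ skewAdjoint A)
    (hy : y ∈ skewAdjoint A) : ‖exp x - exp y‖ ≤ ‖x - y‖ := by
  let +nondep : NormedAlgebra ℚ A := .restrictScalars ℚ ℂ A
  have hunit {z : A} (hz : z ∈ skewAdjoint A) (t : ℝ) : exp (t • z) ∈ unitary A :=
    exp_mem_unitary_of_mem_skewAdjoint (skewAdjoint.smul_mem t hz)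
  simpa using norm_image_sub_le_of_norm_deriv_le_segment_01'
    (fun s _ => (hasDerivAt_exp_smul_mul_exp_one_sub_smul x y s).hasDerivWithinAt)
    (fun s _ => by
      rw [CStarRing.norm_mul_mem_unitary _ (hunit hy _),
        CStarRing.norm_mem_unitary_mul _ (hunit hx s)])

theorem cfc_eq_integral_smul_exp {c : A} (hc : IsSelfAdjoint c) {f g : ℝ → ℂ}
    (hg_cont : Continuous g) (hg_int : Integrable g)
    (hfg : ∀ x : ℝ, f x = ∫ p : ℝ, g p * Complex.exp (I * p * x)) :
    cfc (fun z : ℂ => f z.re) c = ∫ p : ℝ, g p • exp ((I * p) • c) := by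
  have := hc.isStarNormal
  have hspec {z : ℂ} (hz : z ∈ spectrum ℂ c) : (z.re : ℂ) = z := (hc.mem_spectrum_eq_re hz).symm
  calc cfc (fun z : ℂ => f z.re) c
      = cfc (fun z : ℂ => ∫ p : ℝ, g p * Complex.exp (I * p * z)) c :=
        cfc_congr fun z hz => by rw [hfg, hspec hz]
    _ = ∫ p : ℝ, cfc (fun z : ℂ => g p * Complex.exp (I * p * z)) c := by
        refine cfc_integral _ (fun p => ‖g p‖) c (by fun_prop) (.of_forall fun p z hz => ?_)
          hg_int.norm.hasFiniteIntegral
        rw [norm_mul, ← hspec hz, Complex.norm_exp]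
        simp
    _ = ∫ p : ℝ, g p • exp ((I * p) • c) := by
        congr! 2 with p
        rw [cfc_const_mul _ _ c, cfc_comp_const_mul (I * p) Complex.exp c,
          CFC.complex_exp_eq_normedSpace_exp]

theorem integrable_smul_exp {c : A} (hc : IsSelfAdjoint c) {g : ℝ → ℂ} (hg : Integrable g) :
    Integrable fun p : ℝ => g p • exp ((I * p) • c) := by
  let +nondep : NormedAlgebra ℚ A := .restrictScalars ℚ ℂ A
  have hcont : Continuous fun p : ℝ => exp ((I * p) • c) := by fun_prop
  exact hg.smul_bdd 1 hcont.aestronglyMeasurable (.of_forall fun p =>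
    norm_exp_le_one_of_mem_skewAdjoint (hc.I_mul_ofReal_smul_mem_skewAdjoint p))

theorem norm_integral_smul_exp_add_sub_le {a r : A} (ha : IsSelfAdjoint a) (hr : IsSelfAdjoint r)
    {g : ℝ → ℂ} (hg : Integrable g) (hpg : Integrable fun p : ℝ => (p : ℂ) * g p) :
    ‖(∫ p : ℝ, g p • exp ((I * p) • (a + r))) - ∫ p : ℝ, g p • exp ((I * p) • a)‖
      ≤ ‖r‖ * ∫ p : ℝ, ‖(p : ℂ) * g p‖ := by
  rw [← integral_sub (integrable_smul_exp (ha.add hr) hg) (integrable_smul_exp ha hg),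
    ← integral_const_mul]
  refine norm_integral_le_of_norm_le (hpg.norm.const_mul _) (.of_forall fun p => ?_)
  have hexp : ‖exp ((I * p) • (a + r)) - exp ((I * p) • a)‖ ≤ ‖(p : ℂ)‖ * ‖r‖ := by
    refine (norm_exp_sub_exp_le_of_mem_skewAdjoint
      ((ha.add hr).I_mul_ofReal_smul_mem_skewAdjoint p)
      (ha.I_mul_ofReal_smul_mem_skewAdjoint p)).trans_eq ?_
    rw [← smul_sub, add_sub_cancel_left, norm_smul, norm_mul, Complex.norm_I, one_mul]
  rw [← smul_sub, norm_smul, norm_mul]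
  calc ‖g p‖ * ‖exp ((I * p) • (a + r)) - exp ((I * p) • a)‖
      ≤ ‖g p‖ * (‖(p : ℂ)‖ * ‖r‖) := by gcongr
    _ = ‖r‖ * (‖(p : ℂ)‖ * ‖g p‖) := by ring

end CStarAlgebra

theorem norm_cfc_perturbation_le_general
    {A : Type*} [CStarAlgebra A] (a r : A) (ha : IsSelfAdjoint a) (hr : IsSelfAdjoint r)
    (f : ℝ → ℂ) (hf_cont : Continuous f)
    (hf_int : Integrable f)
    (hphat_int : Integrable (fun p : ℝ => (p : ℂ) * fourierHat f p)) :
    ‖cfc (fun z : ℂ => f z.re) (a + r) - cfc (fun z : ℂ => f z.re) a‖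
      ≤ (Real.sqrt (2 * Real.pi))⁻¹ * ‖r‖ * ∫ p : ℝ, ‖(p : ℂ) * fourierHat f p‖ := by
  set g : ℝ → ℂ := fun p => (Real.sqrt (2 * Real.pi) : ℂ)⁻¹ * fourierHat f p
  have hhat_cont := continuous_fourierHat hf_int
  have hhat_int : Integrable (fourierHat f) :=
    hhat_cont.integrable_of_integrable_id_smul (by simpa only [Complex.real_smul] using hphat_int)
  have hfg (x : ℝ) : f x = ∫ p : ℝ, g p * Complex.exp (I * p * x) := by
    rw [← fourierHat_inversion hf_cont hf_int hhat_int x, ← integral_const_mul]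
    simp only [g, mul_assoc]
  have hpg : Integrable fun p : ℝ => (p : ℂ) * g p :=
    (hphat_int.const_mul _).congr (.of_forall fun p => mul_left_comm _ _ _)
  rw [cfc_eq_integral_smul_exp (ha.add hr) (by fun_prop) (hhat_int.const_mul _) hfg,
    cfc_eq_integral_smul_exp ha (by fun_prop) (hhat_int.const_mul _) hfg]
  refine (norm_integral_smul_exp_add_sub_le ha hr (hhat_int.const_mul _) hpg).trans_eq ?_
  simp only [mul_left_comm _ (_⁻¹ : ℂ), norm_mul (_⁻¹ : ℂ), integral_const_mul, norm_inv,
    Complex.norm_real, Real.norm_of_nonneg (Real.sqrt_nonneg _)]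
  ring

/-- **perturbation estimate.** For selfadjoint elements `a`, `r` of a unital
complex C*-algebra and a bounded continuous integrable `f : ℝ → ℂ` with `p·f̂(p)` integrable,
`‖f(a + r) − f(a)‖ ≤ (2π)^{-1/2} · ‖r‖ · ∫ |p·f̂(p)| dp`. -/
theorem norm_cfc_perturbation_le
    {A : Type*} [CStarAlgebra A] (a r : A) (ha : IsSelfAdjoint a) (hr : IsSelfAdjoint r)
    (f : ℝ → ℂ) (hf_cont : Continuous f) (hf_bdd : ∃ C : ℝ, ∀ x : ℝ, ‖f x‖ ≤ C)
    (hf_int : Integrable f)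
    (hphat_int : Integrable (fun p : ℝ => (p : ℂ) * fourierHat f p)) :
    ‖cfc (fun z : ℂ => f z.re) (a + r) - cfc (fun z : ℂ => f z.re) a‖
      ≤ (Real.sqrt (2 * Real.pi))⁻¹ * ‖r‖ * ∫ p : ℝ, ‖(p : ℂ) * fourierHat f p‖ :=
  norm_cfc_perturbation_le_general a r ha hr f hf_cont hf_int hphat_int
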